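/- If Σ is a semicomplete weakly distance-regular digraph with girth 3, then the lexicographic product Σ∘C₄ is a weakly distance-regular digraph. -/
import Mathlib


open Set Matrix

namespace Paper

variable {V : Type*} {W : Type*}

/-- There is a directed walk of length `n` from `x` to `y` in the digraph with arc relation `A`. -/
def HasPathOfLength (A : V → V → Prop) (x y : V) (n : ℕ) : Prop :=
  ∃ p : ℕ → V, p 0 = x ∧ p n = y ∧ ∀ i < n, A (p i) (p (i + 1))

/-- A digraph is strongly connected if there is a directed path between any two vertices. -/
def IsStronglyConnected (A : V → V → Prop) : Prop :=
  ∀ x y, ∃ n, HasPathOfLength A x y n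

/-- The distance `∂(x,y)`: the length of a shortest directed path from `x` to `y`. -/
noncomputable def ddist (A : V → V → Prop) (x y : V) : ℕ :=
  sInf {n | HasPathOfLength A x y n}

/-- The two-way distance `∂̃(x,y) = (∂(x,y), ∂(y,x))`. -/
noncomputable def tdist (A : V → V → Prop) (x y : V) : ℕ × ℕ :=
  (ddist A x y, ddist A y x)

/-- The two-way distance set `∂̃(Γ)`. -/
def tdistSet (A : V → V → Prop) : Set (ℕ × ℕ) :=
  {d | ∃ x y, tdist A x y = d}

/-- The number `p_{ĩ,j̃}(x,y) = |{z : ∂̃(x,z) = ĩ, ∂̃(z,y) = j̃}|`. -/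
noncomputable def pnum (A : V → V → Prop) (i j : ℕ × ℕ) (x y : V) : ℕ :=
  {z | tdist A x z = i ∧ tdist A z y = j}.ncard

/-- A weakly distance-regular digraph. -/
def IsWDRD (A : V → V → Prop) : Prop :=
  IsStronglyConnected A ∧
  (∃ d ∈ tdistSet A, d.1 ≠ d.2) ∧
  ∀ i j : ℕ × ℕ, ∀ x y x' y' : V,
    tdist A x y = tdist A x' y' → pnum A i j x y = pnum A i j x' y'

/-- Commutativity of the attached scheme: `p_{ĩ,j̃}^{h̃} = p_{j̃,ĩ}^{h̃}`. -/
def IsCommutativeDigraph (A : V → V → Prop) : Prop :=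
  ∀ i j : ℕ × ℕ, ∀ x y : V, pnum A i j x y = pnum A j i x y

/-- A commutative weakly distance-regular digraph. -/
def IsCWDRD (A : V → V → Prop) : Prop :=
  IsWDRD A ∧ IsCommutativeDigraph A

/-- `A` is semicomplete multipartite with partition given by `f` (parts are the fibres). -/
def IsSemicompleteMultipartiteWith (A : V → V → Prop) {m : ℕ} (f : V → Fin m) : Prop :=
  (∀ x, ¬ A x x) ∧ (∀ i, 2 ≤ {x | f x = i}.ncard) ∧
  ∀ x y : V, x ≠ y → ((A x y ∨ A y x) ↔ f x ≠ f y)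

/-- A semicomplete multipartite digraph: the vertex set is partitioned into `m ≥ 2` partite
sets, each of size at least `2`, and two distinct vertices are joined by an arc in at least
one direction iff they lie in different partite sets. -/
def IsSemicompleteMultipartite (A : V → V → Prop) : Prop :=
  ∃ m : ℕ, 2 ≤ m ∧ ∃ f : V → Fin m, IsSemicompleteMultipartiteWith A f

/-- A semicomplete digraph: any two distinct vertices are joined by an arc in
at least one direction. -/
def IsSemicomplete (A : V → V → Prop) : Prop :=
  (∀ x, ¬ A x x) ∧ ∀ x y : V, x ≠ y → A x y ∨ A y x

/-- A circuit of length `n`: a sequence `w₀,…,w_{n-1}` with consecutive arcs and an arc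
from `w_{n-1}` back to `w₀`. -/
def HasCircuitOfLength (A : V → V → Prop) (n : ℕ) : Prop :=
  ∃ p : ℕ → V, p n = p 0 ∧ ∀ i < n, A (p i) (p (i + 1))

/-- The girth: the length of a shortest circuit. -/
noncomputable def girth (A : V → V → Prop) : ℕ :=
  sInf {n | 1 ≤ n ∧ HasCircuitOfLength A n}

/-- Lexicographic product of digraphs. -/
def lexProd (A : V → V → Prop) (B : W → W → Prop) : V × W → V × W → Prop :=
  fun u v => A u.1 v.1 ∨ (u.1 = v.1 ∧ B u.2 v.2)

/-- The `n`-coclique extension of a digraph: `A ∘ K̄ₙ`. -/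
def cocliqueExt (A : V → V → Prop) (n : ℕ) : V × Fin n → V × Fin n → Prop :=
  lexProd A (fun _ _ : Fin n => False)

/-- Isomorphism of digraphs. -/
def Iso (A : V → V → Prop) (B : W → W → Prop) : Prop :=
  ∃ e : V ≃ W, ∀ x y : V, A x y ↔ B (e x) (e y)

/-- An `(m,r)`-team semicomplete multipartite digraph with partite sets the fibres of `f`:
`m ≥ 2` parts, each of size `r ≥ 2`. -/
def IsTeamSMD (A : V → V → Prop) {m : ℕ} (f : V → Fin m) (r : ℕ) : Prop :=
  2 ≤ m ∧ 2 ≤ r ∧ (∀ x, ¬ A x x) ∧ (∀ i : Fin m, {x | f x = i}.ncard = r) ∧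
  ∀ x y : V, x ≠ y → ((A x y ∨ A y x) ↔ f x ≠ f y)

/-- Regular of valency `k`: every vertex has exactly `k` out-neighbours and `k`
in-neighbours. -/
def IsRegularOfValency (A : V → V → Prop) (k : ℕ) : Prop :=
  ∀ x : V, {y | A x y}.ncard = k ∧ {y | A y x}.ncard = k

open Classical in
/-- Adjacency matrix of the symmetric part `EΓ`. -/
noncomputable def matE (A : V → V → Prop) : Matrix V V ℤ :=
  Matrix.of fun x y => if A x y ∧ A y x then 1 else 0

open Classical in
/-- Adjacency matrix of the asymmetric part `A⃗Γ`. -/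
noncomputable def matAr (A : V → V → Prop) : Matrix V V ℤ :=
  Matrix.of fun x y => if A x y ∧ ¬ A y x then 1 else 0

open Classical in
/-- Adjacency matrix of a digraph. -/
noncomputable def matAdj (A : V → V → Prop) : Matrix V V ℤ :=
  Matrix.of fun x y => if A x y then 1 else 0

/-- The all-ones matrix `J`. -/
def matJ (V : Type*) : Matrix V V ℤ := Matrix.of fun _ _ => 1

open Classical in
/-- The matrix equations in the definition of a doubly regular team semicomplete multipartite
digraph, with constants `t, αᵢ, βᵢ, γᵢ, ηᵢ` (`A₀ = matE A`, `A₁ = matAr A`). -/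
def DRConstEq [Fintype V] (A : V → V → Prop) (t : ℤ) (α β γ η : ℕ → ℤ) : Prop :=
  ∀ i j : Fin 2,
    ![matE A, matAr A] i * ![matE A, matAr A] j =
      (if (i : ℕ) + (j : ℕ) = 0 then t else 0) • (1 : Matrix V V ℤ) +
      α ((i : ℕ) + (j : ℕ)) • matAr A +
      β ((i : ℕ) + (j : ℕ)) • (matAr A)ᵀ +
      γ ((i : ℕ) + (j : ℕ)) • matE A +
      η ((i : ℕ) + (j : ℕ)) • (matJ V - 1 - matAr A - (matAr A)ᵀ - matE A)

/-- A doubly regular `(m,r)`-team semicomplete multipartite digraph. -/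
def IsDoublyRegularTeamSMD [Fintype V] (A : V → V → Prop) {m : ℕ} (f : V → Fin m)
    (r : ℕ) : Prop :=
  IsTeamSMD A f r ∧ (∃ k, IsRegularOfValency A k) ∧
  ∃ t α β γ η, DRConstEq A t α β γ η

/-- `A_j⁺(x)`: out-neighbours of `x` in the part `j` via single arcs. -/
def Aplus (A : V → V → Prop) {m : ℕ} (f : V → Fin m) (j : Fin m) (x : V) : Set V :=
  {y | f y = j ∧ A x y ∧ ¬ A y x}

/-- `E_j(x)`: neighbours of `x` in the part `j` via edges (pairs of opposite arcs). -/
def Epart (A : V → V → Prop) {m : ℕ} (f : V → Fin m) (j : Fin m) (x : V) : Set V :=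
  {y | f y = j ∧ A x y ∧ A y x}

/-- Type I: `β₁+β₂-α₁-α₂ = r` and the digraph is an `r`-coclique extension of a
semicomplete digraph. -/
def TypeI (A : V → V → Prop) (r : ℕ) (α β : ℕ → ℤ) : Prop :=
  β 1 + β 2 - α 1 - α 2 = (r : ℤ) ∧
  ∃ (N : ℕ) (S : Fin N → Fin N → Prop),
    1 ≤ N ∧ IsSemicomplete S ∧ Iso A (cocliqueExt S r)

/-- Type II: `β₁+β₂-α₁-α₂ = 0` and `c_{ij} = c_{ji} = (r - e_{ij})/2` for all pairs `i ≠ j`. -/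
def TypeII (A : V → V → Prop) {m : ℕ} (f : V → Fin m) (r : ℕ) (α β : ℕ → ℤ) : Prop :=
  β 1 + β 2 - α 1 - α 2 = 0 ∧
  ∀ i j : Fin m, i ≠ j → ∃ c e : ℕ,
    (∀ x, f x = i → (Aplus A f j x).ncard = c ∧ (Epart A f j x).ncard = e) ∧
    (∀ y, f y = j → (Aplus A f i y).ncard = c) ∧
    c + c + e = r

/-- Condition (ii) of Type III for the ordered pair `(i,j)`: `V_i` splits as
`V_i' ∪ V_i''` with `(V_i' × V_j) ∪ (V_j × V_i'') ⊆ A⃗Γ`. -/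
def TypeIIIsplitB (A : V → V → Prop) {m : ℕ} (f : V → Fin m) (i j : Fin m) : Prop :=
  ∃ S : Set V, S ⊆ {x | f x = i} ∧ S.Nonempty ∧ ({x | f x = i} \ S).Nonempty ∧
    (∀ x ∈ S, ∀ y : V, f y = j → A x y ∧ ¬ A y x) ∧
    (∀ y : V, f y = j → ∀ x ∈ {x | f x = i} \ S, A y x ∧ ¬ A x y)

/-- Condition (iii) of Type III for the pair `(i,j)`. -/
def TypeIIIsplitC (A : V → V → Prop) {m : ℕ} (f : V → Fin m) (i j : Fin m) : Prop :=
  ∃ S T' : Set V,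
    S ⊆ {x | f x = i} ∧ S.Nonempty ∧ ({x | f x = i} \ S).Nonempty ∧
    T' ⊆ {y | f y = j} ∧ T'.Nonempty ∧ ({y | f y = j} \ T').Nonempty ∧
    (∀ x ∈ S, ∀ y ∈ T', A x y ∧ A y x) ∧
    (∀ x ∈ {x | f x = i} \ S, ∀ y ∈ {y | f y = j} \ T', A x y ∧ A y x) ∧
    (∀ x ∈ S, ∀ y ∈ {y | f y = j} \ T', A x y ∧ ¬ A y x) ∧
    (∀ y ∈ T', ∀ x ∈ {x | f x = i} \ S, A y x ∧ ¬ A x y)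

/-- Type III. -/
def TypeIII (A : V → V → Prop) {m : ℕ} (f : V → Fin m) (r : ℕ) (α β : ℕ → ℤ) : Prop :=
  2 * (β 1 + β 2 - α 1 - α 2) = (r : ℤ) ∧
  ∀ i j : Fin m, i ≠ j →
    (∀ x y : V, f x = i → f y = j → A x y ∧ A y x) ∨
    (TypeIIIsplitB A f i j ∨ TypeIIIsplitB A f j i) ∨
    TypeIIIsplitC A f i j

/-- An `(m,r)`-team tournament: an `(m,r)`-team semicomplete multipartite digraph with
no pair of opposite arcs. -/
def IsTeamTournament (A : V → V → Prop) {m : ℕ} (f : V → Fin m) (r : ℕ) : Prop :=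
  IsTeamSMD A f r ∧ ∀ x y : V, ¬ (A x y ∧ A y x)

open Classical in
/-- A doubly regular `(m,r)`-team tournament with parameters `(α,β,γ)`:
`A² = αA + βAᵀ + γ(J - I - A - Aᵀ)`. -/
def IsDRTeamTournament [Fintype V] (A : V → V → Prop) {m : ℕ} (f : V → Fin m) (r : ℕ)
    (α β γ : ℤ) : Prop :=
  IsTeamTournament A f r ∧ (∃ k, IsRegularOfValency A k) ∧
  matAdj A * matAdj A =
    α • matAdj A + β • (matAdj A)ᵀ + γ • (matJ V - 1 - matAdj A - (matAdj A)ᵀ)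

/-- Type II of a doubly regular team tournament: `β - α = 0`, `r` even, and
`|N⁺(x) ∩ V_i| = r/2` for every partite set `V_i` and vertex `x ∉ V_i`. -/
def TournamentTypeII (A : V → V → Prop) {m : ℕ} (f : V → Fin m) (r : ℕ) (α β : ℤ) : Prop :=
  β = α ∧ Even r ∧ ∀ (i : Fin m) (x : V), f x ≠ i → 2 * {y | f y = i ∧ A x y}.ncard = r

/-- The Cayley digraph `Cay(ℤ₆, {1,2})`. -/
def Cay6 : ZMod 6 → ZMod 6 → Prop := fun x y => y - x = 1 ∨ y - x = 2

/-- The directed cycle `C₄`. -/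
def C4 : ZMod 4 → ZMod 4 → Prop := fun x y => y = x + 1

lemma hpl0 (A : V → V → Prop) (x : V) : HasPathOfLength A x x 0 :=
  ⟨fun _ => x, rfl, rfl, fun i hi => absurd hi (by omega)⟩

lemma hpl1 {A : V → V → Prop} {x y : V} (h : A x y) : HasPathOfLength A x y 1 := by
  refine ⟨fun i => if i = 0 then x else y, by simp, by simp, ?_⟩
  intro i hi
  have : i = 0 := by omega
  simpa [this] using h

lemma hpl_trans {A : V → V → Prop} {x y z : V} {m n : ℕ}
    (h1 : HasPathOfLength A x y m) (h2 : HasPathOfLength A y z n) :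
    HasPathOfLength A x z (m + n) := by
  obtain ⟨p, hp0, hpm, hp⟩ := h1
  obtain ⟨q, hq0, hqn, hq⟩ := h2
  refine ⟨fun i => if i < m then p i else q (i - m), ?_, ?_, ?_⟩
  · by_cases h : 0 < m
    · simpa [h] using hp0
    · have hm : m = 0 := by omega
      subst hm
      simp only [Nat.lt_irrefl, if_false, Nat.sub_zero]
      rw [hq0, ← hpm, hp0]
  · have : ¬ (m + n < m) := by omega
    simp only [this, if_false]
    simpa using hqn
  · intro i hi
    by_cases h : i + 1 < m
    · have h' : i < m := by omega
      simpa [h, h'] using hp i (by omega)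
    · by_cases h' : i < m
      · have him : i + 1 = m := by omega
        simp only [h, h', if_true, if_false]
        rw [show i + 1 - m = 0 by omega, hq0, ← hpm, ← him]
        exact hp i (by omega)
      · simp only [h, h', if_false]
        have : i + 1 - m = (i - m) + 1 := by omega
        rw [this]
        exact hq (i - m) (by omega)

lemma hpl0_eq {A : V → V → Prop} {x y : V} (h : HasPathOfLength A x y 0) : x = y := by
  obtain ⟨p, h0, hn, _⟩ := h; rw [← h0, hn]

lemma hpl1_arc {A : V → V → Prop} {x y : V} (h : HasPathOfLength A x y 1) : A x y := by
  obtain ⟨p, h0, hn, ha⟩ := h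
  have := ha 0 (by omega)
  rwa [h0, hn] at this

lemma hpl2_mid {A : V → V → Prop} {x y : V} (h : HasPathOfLength A x y 2) :
    ∃ z, A x z ∧ A z y := by
  obtain ⟨p, h0, hn, ha⟩ := h
  exact ⟨p 1, h0 ▸ ha 0 (by omega), hn ▸ ha 1 (by omega)⟩

lemma ddist_le {A : V → V → Prop} {x y : V} {n : ℕ} (h : HasPathOfLength A x y n) :
    ddist A x y ≤ n := Nat.sInf_le h

lemma ddist_self (A : V → V → Prop) (x : V) : ddist A x x = 0 :=
  Nat.le_zero.mp (ddist_le (hpl0 A x))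

lemma hpl_of_ddist {A : V → V → Prop} {x y : V} {n : ℕ} (h : ddist A x y = n) (hn : n ≠ 0) :
    HasPathOfLength A x y n := by
  have hne : {m | HasPathOfLength A x y m}.Nonempty := by
    by_contra hc
    rw [Set.not_nonempty_iff_eq_empty] at hc
    rw [ddist, hc] at h
    simp at h
    omega
  have := Nat.sInf_mem hne
  rwa [show sInf {m | HasPathOfLength A x y m} = n from h] at this

lemma ddist_ne_zero {A : V → V → Prop} {x y : V} (h : ∃ n, HasPathOfLength A x y n)
    (hxy : x ≠ y) : ddist A x y ≠ 0 := by
  intro h0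
  have h1 : HasPathOfLength A x y (ddist A x y) := Nat.sInf_mem h
  rw [h0] at h1
  exact hxy (hpl0_eq h1)

lemma arc_iff_ddist {A : V → V → Prop} (hirr : ∀ a, ¬ A a a) (x y : V) :
    A x y ↔ ddist A x y = 1 := by
  constructor
  · intro h
    have hxy : x ≠ y := by rintro rfl; exact hirr x h
    have h1 : ddist A x y ≤ 1 := ddist_le (hpl1 h)
    have h0 : ddist A x y ≠ 0 := ddist_ne_zero ⟨1, hpl1 h⟩ hxy
    omega
  · intro h
    exact hpl1_arc (hpl_of_ddist h one_ne_zero)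

lemma tdist_self (A : V → V → Prop) (x : V) : tdist A x x = (0, 0) := by
  simp [tdist, ddist_self]

section Sigma
variable [Fintype W] {S : W → W → Prop}

lemma outdeg_const (hirr : ∀ x, ¬ S x x)
    (hp : ∀ i j : ℕ × ℕ, ∀ x y x' y' : W, tdist S x y = tdist S x' y' → pnum S i j x y = pnum S i j x' y') :
    ∀ x x' : W, {z | S x z}.ncard = {z | S x' z}.ncard := by
  have key : ∀ n (x x' : W), {z | S x z ∧ ddist S z x < n}.ncard = {z | S x' z ∧ ddist S z x' < n}.ncard := by
    intro n
    induction n with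
    | zero => intro x x'; simp
    | succ n ih =>
      intro x x'
      have hU : ∀ y : W, {z | S y z ∧ ddist S z y < n+1} = {z | S y z ∧ ddist S z y < n} ∪ {z | S y z ∧ ddist S z y = n} := by
        intro y; ext z; simp only [Set.mem_setOf_eq, Set.mem_union]
        constructor
        · rintro ⟨h1, h2⟩
          rcases Nat.lt_or_ge (ddist S z y) n with h | h
          · exact Or.inl ⟨h1, h⟩
          · exact Or.inr ⟨h1, by omega⟩
        · rintro (⟨h1, h2⟩ | ⟨h1, h2⟩) <;> exact ⟨h1, by omega⟩
      have hdisj : ∀ y : W, Disjoint {z | S y z ∧ ddist S z y < n} {z | S y z ∧ ddist S z y = n} := by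
        intro y
        rw [Set.disjoint_left]
        rintro z ⟨_, h2⟩ ⟨_, h4⟩; omega
      have hD : ∀ y : W, {z | S y z ∧ ddist S z y = n} = {z | tdist S y z = (1, n) ∧ tdist S z y = (n, 1)} := by
        intro y; ext z
        simp only [Set.mem_setOf_eq, tdist, Prod.mk.injEq]
        constructor
        · rintro ⟨h1, h2⟩
          exact ⟨⟨(arc_iff_ddist hirr y z).1 h1, h2⟩, h2, (arc_iff_ddist hirr y z).1 h1⟩
        · rintro ⟨⟨h1, h2⟩, _⟩
          exact ⟨(arc_iff_ddist hirr y z).2 h1, h2⟩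
      rw [hU x, hU x', Set.ncard_union_eq (hdisj x) (Set.toFinite _) (Set.toFinite _),
        Set.ncard_union_eq (hdisj x') (Set.toFinite _) (Set.toFinite _), ih x x', hD x, hD x']
      have := hp (1, n) (n, 1) x x x' x' (by rw [tdist_self, tdist_self])
      simp only [pnum] at this
      rw [this]
  intro x x'
  obtain ⟨M, hM1, hM2⟩ : ∃ M, (∀ z, ddist S z x < M) ∧ (∀ z, ddist S z x' < M) := by
    refine ⟨(Finset.univ.sup fun z => ddist S z x) + (Finset.univ.sup fun z => ddist S z x') + 1, fun z => ?_, fun z => ?_⟩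
    · have := Finset.le_sup (f := fun z => ddist S z x) (Finset.mem_univ z)
      omega
    · have := Finset.le_sup (f := fun z => ddist S z x') (Finset.mem_univ z)
      omega
  have e1 : {z | S x z} = {z | S x z ∧ ddist S z x < M} := by
    ext z; simp only [Set.mem_setOf_eq]; exact ⟨fun h => ⟨h, hM1 z⟩, fun h => h.1⟩
  have e2 : {z | S x' z} = {z | S x' z ∧ ddist S z x' < M} := by
    ext z; simp only [Set.mem_setOf_eq]; exact ⟨fun h => ⟨h, hM2 z⟩, fun h => h.1⟩
  rw [e1, e2, key M x x']

lemma structure_S (hirr : ∀ x, ¬ S x x) (htot : ∀ x y : W, x ≠ y → S x y ∨ S y x)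
    (hnd : ∀ x y : W, ¬ (S x y ∧ S y x)) (hsc : IsStronglyConnected S)
    (hp : ∀ i j : ℕ × ℕ, ∀ x y x' y' : W, tdist S x y = tdist S x' y' → pnum S i j x y = pnum S i j x' y') :
    ∀ x y : W, x ≠ y → (S x y ∧ tdist S x y = (1, 2)) ∨ (S y x ∧ tdist S x y = (2, 1)) := by
  have hreg := outdeg_const hirr hp
  have claim : ∀ x y : W, S x y → ddist S y x = 2 := by
    intro x y hxy
    have hxyne : x ≠ y := fun h => hirr x (h ▸ hxy)
    have h0 : ddist S y x ≠ 0 := ddist_ne_zero (hsc y x) (Ne.symm hxyne)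
    have h1 : ddist S y x ≠ 1 := by
      intro h
      exact hnd x y ⟨hxy, (arc_iff_ddist hirr y x).2 h⟩
    have h2 : ddist S y x ≤ 2 := by
      by_contra hgt
      have hsub : insert y {z | S y z} ⊆ {z | S x z} := by
        intro z hz
        rcases Set.mem_insert_iff.1 hz with rfl | hz
        · exact hxy
        · simp only [Set.mem_setOf_eq] at hz ⊢
          have hzx : z ≠ x := by
            rintro rfl
            exact hgt (le_trans (ddist_le (hpl1 hz)) (by omega))
          have hnzx : ¬ S z x := by
            intro hc
            exact hgt (le_trans (ddist_le (hpl_trans (hpl1 hz) (hpl1 hc))) (by omega))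
          rcases htot z x hzx with hc | hc
          · exact absurd hc hnzx
          · exact hc
      have hy_notin : y ∉ {z | S y z} := hirr y
      have hcard := Set.ncard_le_ncard hsub (Set.toFinite _)
      rw [Set.ncard_insert_of_notMem hy_notin (Set.toFinite _)] at hcard
      have := hreg y x
      omega
    omega
  intro x y hne
  rcases htot x y hne with h | h
  · exact Or.inl ⟨h, by rw [tdist, (arc_iff_ddist hirr x y).1 h, claim x y h]⟩
  · exact Or.inr ⟨h, by rw [tdist, (arc_iff_ddist hirr y x).1 h, claim y x h]⟩

end Sigma

def fib0 (d : ZMod 4) : ℕ × ℕ := (d.val, (-d).val)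

section Prod
variable [Fintype W] {S : W → W → Prop}

lemma ddist_fiber (hirr : ∀ x, ¬ S x x) (hnd : ∀ x y, ¬ (S x y ∧ S y x)) (u : W) (a b : ZMod 4) :
    ddist (lexProd S C4) (u, a) (u, b) = (b - a).val := by
  have harc : ∀ c : ZMod 4, lexProd S C4 (u, c) (u, c + 1) := fun c => Or.inr ⟨rfl, rfl⟩
  have h4 : ∀ d : ZMod 4, d = 0 ∨ d = 1 ∨ d = 2 ∨ d = 3 := by decide
  have hb : b = a + (b - a) := by ring
  have hne : ∀ k : ZMod 4, b - a = k → k ≠ 0 → ((u, a) : W × ZMod 4) ≠ (u, b) := by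
    intro k hk hk0 h
    rw [Prod.mk.injEq] at h
    rw [← h.2, sub_self] at hk
    exact hk0 hk.symm
  rcases h4 (b - a) with hk | hk | hk | hk <;> rw [hk]
  · have : b = a := by rw [hk, add_zero] at hb; exact hb
    rw [this, ddist_self]
    rfl
  · have hba : b = a + 1 := by rw [hk] at hb; exact hb
    have h1 : ddist (lexProd S C4) (u, a) (u, b) ≤ 1 := ddist_le (hba ▸ hpl1 (harc a))
    have h0 : ddist (lexProd S C4) (u, a) (u, b) ≠ 0 :=
      ddist_ne_zero ⟨1, hba ▸ hpl1 (harc a)⟩ (hne 1 hk (by decide))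
    have hv : ((1 : ZMod 4)).val = 1 := rfl
    omega
  · have hba : b = a + 2 := by rw [hk] at hb; exact hb
    have hw : HasPathOfLength (lexProd S C4) (u, a) (u, b) 2 := by
      rw [hba, show a + 2 = a + 1 + 1 by ring]
      exact hpl_trans (hpl1 (harc a)) (hpl1 (harc (a + 1)))
    have h2 : ddist (lexProd S C4) (u, a) (u, b) ≤ 2 := ddist_le hw
    have h0 : ddist (lexProd S C4) (u, a) (u, b) ≠ 0 := ddist_ne_zero ⟨2, hw⟩ (hne 2 hk (by decide))
    have h1 : ddist (lexProd S C4) (u, a) (u, b) ≠ 1 := by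
      intro h
      rcases hpl1_arc (hpl_of_ddist h one_ne_zero) with h | ⟨_, h⟩
      · exact hirr u h
      · rw [hba] at h
        have h21 : (2 : ZMod 4) = 1 := add_left_cancel (a := a) h
        exact absurd h21 (by decide)
    have hv : ((2 : ZMod 4)).val = 2 := rfl
    omega
  · have hba : b = a + 3 := by rw [hk] at hb; exact hb
    have hw : HasPathOfLength (lexProd S C4) (u, a) (u, b) 3 := by
      rw [hba, show a + 3 = a + 1 + 1 + 1 by ring]
      exact hpl_trans (hpl_trans (hpl1 (harc a)) (hpl1 (harc (a + 1)))) (hpl1 (harc (a + 1 + 1)))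
    have h3 : ddist (lexProd S C4) (u, a) (u, b) ≤ 3 := ddist_le hw
    have h0 : ddist (lexProd S C4) (u, a) (u, b) ≠ 0 := ddist_ne_zero ⟨3, hw⟩ (hne 3 hk (by decide))
    have h1 : ddist (lexProd S C4) (u, a) (u, b) ≠ 1 := by
      intro h
      rcases hpl1_arc (hpl_of_ddist h one_ne_zero) with h | ⟨_, h⟩
      · exact hirr u h
      · rw [hba] at h
        have h31 : (3 : ZMod 4) = 1 := add_left_cancel (a := a) h
        exact absurd h31 (by decide)
    have h2 : ddist (lexProd S C4) (u, a) (u, b) ≠ 2 := by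
      intro h
      obtain ⟨⟨w, c⟩, hz1, hz2⟩ := hpl2_mid (hpl_of_ddist h two_ne_zero)
      rcases hz1 with h1 | ⟨he1, hc1⟩ <;> rcases hz2 with h2' | ⟨he2, hc2⟩
      · exact hnd u w ⟨h1, h2'⟩
      · simp only at he2
        rw [he2] at h1
        exact hirr u h1
      · simp only at he1
        rw [← he1] at h2'
        exact hirr u h2'
      · simp only [C4] at hc1 hc2
        rw [hc1, hba] at hc2
        have h32 : (3 : ZMod 4) = 2 :=
          add_left_cancel (a := a) (hc2.trans (show a + 1 + 1 = a + 2 by ring))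
        exact absurd h32 (by decide)
    have hv : ((3 : ZMod 4)).val = 3 := rfl
    omega

lemma ddist_cross (hirr : ∀ x, ¬ S x x) (hnd : ∀ x y, ¬ (S x y ∧ S y x))
    (hstr : ∀ x y : W, x ≠ y → (S x y ∧ tdist S x y = (1, 2)) ∨ (S y x ∧ tdist S x y = (2, 1)))
    {u v : W} (huv : u ≠ v) (a b : ZMod 4) :
    ddist (lexProd S C4) (u, a) (v, b) = ddist S u v := by
  have hne : ((u, a) : W × ZMod 4) ≠ (v, b) := fun h => huv (congrArg Prod.fst h)
  rcases hstr u v huv with ⟨h, ht⟩ | ⟨h, ht⟩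
  · have hd1 : ddist S u v = 1 := congrArg Prod.fst ht
    have harc : lexProd S C4 (u, a) (v, b) := Or.inl h
    have h1 : ddist (lexProd S C4) (u, a) (v, b) ≤ 1 := ddist_le (hpl1 harc)
    have h0 : ddist (lexProd S C4) (u, a) (v, b) ≠ 0 := ddist_ne_zero ⟨1, hpl1 harc⟩ hne
    omega
  · have hd2 : ddist S u v = 2 := congrArg Prod.fst ht
    obtain ⟨w, hw1, hw2⟩ := hpl2_mid (hpl_of_ddist hd2 two_ne_zero)
    have hw : HasPathOfLength (lexProd S C4) (u, a) (v, b) 2 :=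
      hpl_trans (hpl1 (show lexProd S C4 (u, a) (w, a) from Or.inl hw1))
        (hpl1 (show lexProd S C4 (w, a) (v, b) from Or.inl hw2))
    have h2 : ddist (lexProd S C4) (u, a) (v, b) ≤ 2 := ddist_le hw
    have h0 : ddist (lexProd S C4) (u, a) (v, b) ≠ 0 := ddist_ne_zero ⟨2, hw⟩ hne
    have h1 : ddist (lexProd S C4) (u, a) (v, b) ≠ 1 := by
      intro hd
      rcases hpl1_arc (hpl_of_ddist hd one_ne_zero) with hc | ⟨hc, _⟩
      · exact hnd u v ⟨hc, h⟩
      · exact huv hc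
    omega

lemma tdist_fiber (hirr : ∀ x, ¬ S x x) (hnd : ∀ x y, ¬ (S x y ∧ S y x)) (u : W) (a b : ZMod 4) :
    tdist (lexProd S C4) (u, a) (u, b) = fib0 (b - a) := by
  rw [tdist, ddist_fiber hirr hnd, ddist_fiber hirr hnd, fib0, neg_sub]

lemma tdist_cross (hirr : ∀ x, ¬ S x x) (hnd : ∀ x y, ¬ (S x y ∧ S y x))
    (hstr : ∀ x y : W, x ≠ y → (S x y ∧ tdist S x y = (1, 2)) ∨ (S y x ∧ tdist S x y = (2, 1)))
    {u v : W} (huv : u ≠ v) (a b : ZMod 4) :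
    tdist (lexProd S C4) (u, a) (v, b) = tdist S u v := by
  rw [tdist, tdist, ddist_cross hirr hnd hstr huv, ddist_cross hirr hnd hstr (Ne.symm huv)]

end Prod

lemma ncard_prod_univ4 {α : Type*} (s : Set α) :
    (s ×ˢ (Set.univ : Set (ZMod 4))).ncard = 4 * s.ncard := by
  rw [← Nat.card_coe_set_eq, Nat.card_congr (Equiv.Set.prod s Set.univ), Nat.card_prod,
    Nat.card_coe_set_eq, Nat.card_coe_set_eq, Set.ncard_univ]
  have h4 : Nat.card (ZMod 4) = 4 := by simp [Nat.card_eq_fintype_card]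
  rw [h4, Nat.mul_comm]

lemma count_shift (i j : ℕ × ℕ) (a b : ZMod 4) :
    {c : ZMod 4 | fib0 (c - a) = i ∧ fib0 (b - c) = j}.ncard =
      {d : ZMod 4 | fib0 d = i ∧ fib0 ((b - a) - d) = j}.ncard := by
  have himg : {c : ZMod 4 | fib0 (c - a) = i ∧ fib0 (b - c) = j} =
      (fun d => d + a) '' {d : ZMod 4 | fib0 d = i ∧ fib0 ((b - a) - d) = j} := by
    ext c
    simp only [Set.mem_image, Set.mem_setOf_eq]
    constructor
    · rintro ⟨h1, h2⟩
      exact ⟨c - a, ⟨h1, by rw [show b - a - (c - a) = b - c by ring]; exact h2⟩, by ring⟩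
    · rintro ⟨d, ⟨h1, h2⟩, rfl⟩
      refine ⟨by rw [show d + a - a = d by ring]; exact h1, ?_⟩
      rw [show b - (d + a) = b - a - d by ring]; exact h2
  rw [himg, Set.ncard_image_of_injective _ (add_left_injective a)]

lemma cnt_shift_left (i : ℕ × ℕ) (a : ZMod 4) :
    {c : ZMod 4 | fib0 (c - a) = i}.ncard = {d : ZMod 4 | fib0 d = i}.ncard := by
  have himg : {c : ZMod 4 | fib0 (c - a) = i} = (fun d => d + a) '' {d : ZMod 4 | fib0 d = i} := by
    ext c
    simp only [Set.mem_image, Set.mem_setOf_eq]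
    constructor
    · intro h1
      exact ⟨c - a, h1, by ring⟩
    · rintro ⟨d, h1, rfl⟩
      rw [show d + a - a = d by ring]; exact h1
  rw [himg, Set.ncard_image_of_injective _ (add_left_injective a)]

lemma cnt_shift_right (j : ℕ × ℕ) (b : ZMod 4) :
    {c : ZMod 4 | fib0 (b - c) = j}.ncard = {d : ZMod 4 | fib0 d = j}.ncard := by
  have himg : {c : ZMod 4 | fib0 (b - c) = j} = (fun d => b - d) '' {d : ZMod 4 | fib0 d = j} := by
    ext c
    simp only [Set.mem_image, Set.mem_setOf_eq]
    constructor
    · intro h1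
      exact ⟨b - c, h1, by ring⟩
    · rintro ⟨d, h1, rfl⟩
      rw [show b - (b - d) = d by ring]; exact h1
  rw [himg, Set.ncard_image_of_injective _ sub_right_injective]

section Main
variable [Fintype W] {S : W → W → Prop}

lemma Wcount
    (hstr : ∀ x y : W, x ≠ y → (S x y ∧ tdist S x y = (1, 2)) ∨ (S y x ∧ tdist S x y = (2, 1)))
    (hp : ∀ i j : ℕ × ℕ, ∀ x y x' y' : W, tdist S x y = tdist S x' y' → pnum S i j x y = pnum S i j x' y')
    (i j : ℕ × ℕ) (u v u' v' : W) (hsame : tdist S u v = tdist S u' v') :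
    {w | w ≠ u ∧ w ≠ v ∧ tdist S u w = i ∧ tdist S w v = j}.ncard =
      {w | w ≠ u' ∧ w ≠ v' ∧ tdist S u' w = i ∧ tdist S w v' = j}.ncard := by
  have hC : ∀ p q : W, p ≠ q → tdist S p q = (1, 2) ∨ tdist S p q = (2, 1) := fun p q h =>
    (hstr p q h).imp And.right And.right
  by_cases hi : i = (1, 2) ∨ i = (2, 1)
  · by_cases hj : j = (1, 2) ∨ j = (2, 1)
    · have hdrop : ∀ p q : W, {w | w ≠ p ∧ w ≠ q ∧ tdist S p w = i ∧ tdist S w q = j} =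
          {w | tdist S p w = i ∧ tdist S w q = j} := by
        intro p q; ext w
        simp only [Set.mem_setOf_eq]
        refine ⟨fun h => ⟨h.2.2.1, h.2.2.2⟩, fun h => ⟨?_, ?_, h.1, h.2⟩⟩
        · rintro rfl
          rw [tdist_self] at h
          rcases hi with rfl | rfl
          · exact absurd h.1 (by decide)
          · exact absurd h.1 (by decide)
        · rintro rfl
          rw [tdist_self] at h
          rcases hj with rfl | rfl
          · exact absurd h.2 (by decide)
          · exact absurd h.2 (by decide)
      rw [hdrop u v, hdrop u' v']
      exact hp i j u v u' v' hsame
    · have hempty : ∀ p q : W, {w | w ≠ p ∧ w ≠ q ∧ tdist S p w = i ∧ tdist S w q = j} = ∅ := by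
        intro p q; ext w
        simp only [Set.mem_setOf_eq, Set.mem_empty_iff_false, iff_false]
        rintro ⟨h1, h2, h3, h4⟩
        exact hj (h4 ▸ hC w q h2)
      rw [hempty, hempty]
  · have hempty : ∀ p q : W, {w | w ≠ p ∧ w ≠ q ∧ tdist S p w = i ∧ tdist S w q = j} = ∅ := by
      intro p q; ext w
      simp only [Set.mem_setOf_eq, Set.mem_empty_iff_false, iff_false]
      rintro ⟨h1, h2, h3, h4⟩
      exact hi (h3 ▸ hC p w (Ne.symm h1))
    rw [hempty, hempty]

lemma pnum_fiber_formula (hirr : ∀ x, ¬ S x x) (hnd : ∀ x y, ¬ (S x y ∧ S y x))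
    (hstr : ∀ x y : W, x ≠ y → (S x y ∧ tdist S x y = (1, 2)) ∨ (S y x ∧ tdist S x y = (2, 1)))
    (i j : ℕ × ℕ) (u : W) (a b : ZMod 4) :
    pnum (lexProd S C4) i j (u, a) (u, b) =
      {d : ZMod 4 | fib0 d = i ∧ fib0 ((b - a) - d) = j}.ncard +
        4 * {w | w ≠ u ∧ w ≠ u ∧ tdist S u w = i ∧ tdist S w u = j}.ncard := by
  have hinj : Function.Injective (fun c : ZMod 4 => ((u, c) : W × ZMod 4)) :=
    fun c c' h => congrArg Prod.snd h
  have hsplit : {z : W × ZMod 4 | tdist (lexProd S C4) (u, a) z = i ∧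
        tdist (lexProd S C4) z (u, b) = j} =
      ((fun c : ZMod 4 => ((u, c) : W × ZMod 4)) '' {c | fib0 (c - a) = i ∧ fib0 (b - c) = j}) ∪
        ({w | w ≠ u ∧ w ≠ u ∧ tdist S u w = i ∧ tdist S w u = j} ×ˢ (Set.univ : Set (ZMod 4))) := by
    ext ⟨w, c⟩
    simp only [Set.mem_setOf_eq, Set.mem_union, Set.mem_image, Set.mem_prod, Set.mem_univ,
      and_true]
    constructor
    · rintro ⟨h1, h2⟩
      by_cases hw : w = u
      · subst hw
        rw [tdist_fiber hirr hnd] at h1 h2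
        exact Or.inl ⟨c, ⟨h1, h2⟩, rfl⟩
      · rw [tdist_cross hirr hnd hstr (fun h => hw h.symm)] at h1
        rw [tdist_cross hirr hnd hstr hw] at h2
        exact Or.inr ⟨hw, hw, h1, h2⟩
    · rintro (⟨c', ⟨hc1, hc2⟩, heq⟩ | ⟨hw, _, h1, h2⟩)
      · rw [Prod.mk.injEq] at heq
        obtain ⟨rfl, rfl⟩ := heq
        rw [tdist_fiber hirr hnd, tdist_fiber hirr hnd]
        exact ⟨hc1, hc2⟩
      · rw [tdist_cross hirr hnd hstr (fun h => hw h.symm), tdist_cross hirr hnd hstr hw]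
        exact ⟨h1, h2⟩
  have hdisj : Disjoint
      ((fun c : ZMod 4 => ((u, c) : W × ZMod 4)) '' {c | fib0 (c - a) = i ∧ fib0 (b - c) = j})
      ({w | w ≠ u ∧ w ≠ u ∧ tdist S u w = i ∧ tdist S w u = j} ×ˢ (Set.univ : Set (ZMod 4))) := by
    rw [Set.disjoint_left]
    rintro ⟨w, c⟩ ⟨c', _, heq⟩ hmem
    rw [Prod.mk.injEq] at heq
    exact hmem.1.1 heq.1.symm
  simp only [pnum]
  rw [hsplit, Set.ncard_union_eq hdisj (Set.toFinite _) (Set.toFinite _),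
    Set.ncard_image_of_injective _ hinj, count_shift, ncard_prod_univ4]

lemma pnum_cross_formula (hirr : ∀ x, ¬ S x x) (hnd : ∀ x y, ¬ (S x y ∧ S y x))
    (hstr : ∀ x y : W, x ≠ y → (S x y ∧ tdist S x y = (1, 2)) ∨ (S y x ∧ tdist S x y = (2, 1)))
    (i j : ℕ × ℕ) {u v : W} (huv : u ≠ v) (a b : ZMod 4) :
    pnum (lexProd S C4) i j (u, a) (v, b) =
      (if tdist S u v = j then {d : ZMod 4 | fib0 d = i}.ncard else 0) +
        ((if tdist S u v = i then {d : ZMod 4 | fib0 d = j}.ncard else 0) +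
          4 * {w | w ≠ u ∧ w ≠ v ∧ tdist S u w = i ∧ tdist S w v = j}.ncard) := by
  have hinju : Function.Injective (fun c : ZMod 4 => ((u, c) : W × ZMod 4)) :=
    fun c c' h => congrArg Prod.snd h
  have hinjv : Function.Injective (fun c : ZMod 4 => ((v, c) : W × ZMod 4)) :=
    fun c c' h => congrArg Prod.snd h
  have hsplit : {z : W × ZMod 4 | tdist (lexProd S C4) (u, a) z = i ∧
        tdist (lexProd S C4) z (v, b) = j} =
      ((fun c : ZMod 4 => ((u, c) : W × ZMod 4)) '' {c | fib0 (c - a) = i ∧ tdist S u v = j}) ∪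
        (((fun c : ZMod 4 => ((v, c) : W × ZMod 4)) '' {c | tdist S u v = i ∧ fib0 (b - c) = j}) ∪
          ({w | w ≠ u ∧ w ≠ v ∧ tdist S u w = i ∧ tdist S w v = j} ×ˢ
            (Set.univ : Set (ZMod 4)))) := by
    ext ⟨w, c⟩
    simp only [Set.mem_setOf_eq, Set.mem_union, Set.mem_image, Set.mem_prod, Set.mem_univ,
      and_true]
    constructor
    · rintro ⟨h1, h2⟩
      by_cases hw : w = u
      · subst hw
        rw [tdist_fiber hirr hnd] at h1
        rw [tdist_cross hirr hnd hstr huv] at h2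
        exact Or.inl ⟨c, ⟨h1, h2⟩, rfl⟩
      · by_cases hw' : w = v
        · subst hw'
          rw [tdist_cross hirr hnd hstr huv] at h1
          rw [tdist_fiber hirr hnd] at h2
          exact Or.inr (Or.inl ⟨c, ⟨h1, h2⟩, rfl⟩)
        · rw [tdist_cross hirr hnd hstr (fun h => hw h.symm)] at h1
          rw [tdist_cross hirr hnd hstr hw'] at h2
          exact Or.inr (Or.inr ⟨hw, hw', h1, h2⟩)
    · rintro (⟨c', ⟨hc1, hc2⟩, heq⟩ | ⟨c', ⟨hc1, hc2⟩, heq⟩ | ⟨hw, hw', h1, h2⟩)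
      · rw [Prod.mk.injEq] at heq
        obtain ⟨rfl, rfl⟩ := heq
        rw [tdist_fiber hirr hnd, tdist_cross hirr hnd hstr huv]
        exact ⟨hc1, hc2⟩
      · rw [Prod.mk.injEq] at heq
        obtain ⟨rfl, rfl⟩ := heq
        rw [tdist_cross hirr hnd hstr huv, tdist_fiber hirr hnd]
        exact ⟨hc1, hc2⟩
      · rw [tdist_cross hirr hnd hstr (fun h => hw h.symm), tdist_cross hirr hnd hstr hw']
        exact ⟨h1, h2⟩
  have hd1 : Disjoint
      ((fun c : ZMod 4 => ((u, c) : W × ZMod 4)) '' {c | fib0 (c - a) = i ∧ tdist S u v = j})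
      (((fun c : ZMod 4 => ((v, c) : W × ZMod 4)) '' {c | tdist S u v = i ∧ fib0 (b - c) = j}) ∪
        ({w | w ≠ u ∧ w ≠ v ∧ tdist S u w = i ∧ tdist S w v = j} ×ˢ
          (Set.univ : Set (ZMod 4)))) := by
    rw [Set.disjoint_left]
    rintro ⟨w, c⟩ ⟨c', _, heq⟩ hmem
    rw [Prod.mk.injEq] at heq
    rcases hmem with ⟨c'', _, heq'⟩ | hmem
    · rw [Prod.mk.injEq] at heq'
      exact huv (heq.1.trans heq'.1.symm)
    · exact hmem.1.1 heq.1.symm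
  have hd2 : Disjoint
      ((fun c : ZMod 4 => ((v, c) : W × ZMod 4)) '' {c | tdist S u v = i ∧ fib0 (b - c) = j})
      ({w | w ≠ u ∧ w ≠ v ∧ tdist S u w = i ∧ tdist S w v = j} ×ˢ
        (Set.univ : Set (ZMod 4))) := by
    rw [Set.disjoint_left]
    rintro ⟨w, c⟩ ⟨c', _, heq⟩ hmem
    rw [Prod.mk.injEq] at heq
    exact hmem.1.2.1 heq.1.symm
  simp only [pnum]
  rw [hsplit, Set.ncard_union_eq hd1 (Set.toFinite _) (Set.toFinite _),
    Set.ncard_union_eq hd2 (Set.toFinite _) (Set.toFinite _),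
    Set.ncard_image_of_injective _ hinju, Set.ncard_image_of_injective _ hinjv,
    ncard_prod_univ4]
  congr 1
  · by_cases htj : tdist S u v = j
    · rw [if_pos htj]
      have : {c : ZMod 4 | fib0 (c - a) = i ∧ tdist S u v = j} = {c : ZMod 4 | fib0 (c - a) = i} := by
        ext c; simp [htj]
      rw [this, cnt_shift_left]
    · rw [if_neg htj]
      have : {c : ZMod 4 | fib0 (c - a) = i ∧ tdist S u v = j} = ∅ := by
        ext c; simp [htj]
      rw [this, Set.ncard_empty]
  · congr 1
    by_cases hti : tdist S u v = i
    · rw [if_pos hti]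
      have : {c : ZMod 4 | tdist S u v = i ∧ fib0 (b - c) = j} = {c : ZMod 4 | fib0 (b - c) = j} := by
        ext c; simp [hti]
      rw [this, cnt_shift_right]
    · rw [if_neg hti]
      have : {c : ZMod 4 | tdist S u v = i ∧ fib0 (b - c) = j} = ∅ := by
        ext c; simp [hti]
      rw [this, Set.ncard_empty]

lemma pnum_const (hirr : ∀ x, ¬ S x x) (hnd : ∀ x y, ¬ (S x y ∧ S y x))
    (hstr : ∀ x y : W, x ≠ y → (S x y ∧ tdist S x y = (1, 2)) ∨ (S y x ∧ tdist S x y = (2, 1)))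
    (hp : ∀ i j : ℕ × ℕ, ∀ x y x' y' : W,
      tdist S x y = tdist S x' y' → pnum S i j x y = pnum S i j x' y')
    (i j : ℕ × ℕ) (x y x' y' : W × ZMod 4)
    (ht : tdist (lexProd S C4) x y = tdist (lexProd S C4) x' y') :
    pnum (lexProd S C4) i j x y = pnum (lexProd S C4) i j x' y' := by
  obtain ⟨u, a⟩ := x
  obtain ⟨v, b⟩ := y
  obtain ⟨u', a'⟩ := x'
  obtain ⟨v', b'⟩ := y'
  have hC : ∀ p q : W, p ≠ q → tdist S p q = (1, 2) ∨ tdist S p q = (2, 1) := fun p q h =>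
    (hstr p q h).imp And.right And.right
  have hfibne : ∀ d : ZMod 4, fib0 d ≠ (1, 2) ∧ fib0 d ≠ (2, 1) := by decide
  have hfibinj : ∀ d e : ZMod 4, fib0 d = fib0 e → d = e := by decide
  by_cases huv : u = v
  · subst huv
    by_cases hu'v' : u' = v'
    · subst hu'v'
      rw [tdist_fiber hirr hnd, tdist_fiber hirr hnd] at ht
      have he : b - a = b' - a' := hfibinj _ _ ht
      rw [pnum_fiber_formula hirr hnd hstr, pnum_fiber_formula hirr hnd hstr, he,
        Wcount hstr hp i j u u u' u' (by rw [tdist_self, tdist_self])]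
    · rw [tdist_fiber hirr hnd, tdist_cross hirr hnd hstr hu'v'] at ht
      rcases hC u' v' hu'v' with h | h <;> rw [h] at ht
      · exact absurd ht (hfibne _).1
      · exact absurd ht (hfibne _).2
  · by_cases hu'v' : u' = v'
    · subst hu'v'
      rw [tdist_cross hirr hnd hstr huv, tdist_fiber hirr hnd] at ht
      rcases hC u v huv with h | h <;> rw [h] at ht
      · exact absurd ht.symm (hfibne _).1
      · exact absurd ht.symm (hfibne _).2
    · rw [tdist_cross hirr hnd hstr huv, tdist_cross hirr hnd hstr hu'v'] at ht
      rw [pnum_cross_formula hirr hnd hstr i j huv, pnum_cross_formula hirr hnd hstr i j hu'v',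
        ht, Wcount hstr hp i j u v u' v' ht]

lemma gamma_sc
    (hstr : ∀ x y : W, x ≠ y → (S x y ∧ tdist S x y = (1, 2)) ∨ (S y x ∧ tdist S x y = (2, 1))) :
    IsStronglyConnected (lexProd S C4) := by
  rintro ⟨u, a⟩ ⟨v, b⟩
  by_cases huv : u = v
  · subst huv
    have h4 : ∀ d : ZMod 4, d = 0 ∨ d = 1 ∨ d = 2 ∨ d = 3 := by decide
    have harc : ∀ c : ZMod 4, lexProd S C4 (u, c) (u, c + 1) := fun c => Or.inr ⟨rfl, rfl⟩
    have hb : b = a + (b - a) := by ring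
    rcases h4 (b - a) with hk | hk | hk | hk <;> rw [hk] at hb
    · refine ⟨0, ?_⟩
      rw [show b = a by rw [hb, add_zero]]
      exact hpl0 _ _
    · exact ⟨1, by rw [hb]; exact hpl1 (harc a)⟩
    · refine ⟨2, ?_⟩
      rw [hb, show a + 2 = a + 1 + 1 by ring]
      exact hpl_trans (hpl1 (harc a)) (hpl1 (harc (a + 1)))
    · refine ⟨3, ?_⟩
      rw [hb, show a + 3 = a + 1 + 1 + 1 by ring]
      exact hpl_trans (hpl_trans (hpl1 (harc a)) (hpl1 (harc (a + 1)))) (hpl1 (harc (a + 1 + 1)))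
  · rcases hstr u v huv with ⟨h, _⟩ | ⟨_, ht⟩
    · exact ⟨1, hpl1 (Or.inl h)⟩
    · obtain ⟨w, hw1, hw2⟩ := hpl2_mid (hpl_of_ddist (congrArg Prod.fst ht) two_ne_zero)
      exact ⟨2, hpl_trans (hpl1 (show lexProd S C4 (u, a) (w, a) from Or.inl hw1))
        (hpl1 (show lexProd S C4 (w, a) (v, b) from Or.inl hw2))⟩

end Main

lemma no_digon {A : V → V → Prop} (hg : girth A = 3) : ∀ x y, ¬ (A x y ∧ A y x) := by
  rintro x y ⟨h1, h2⟩
  have hc : HasCircuitOfLength A 2 := by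
    refine ⟨fun i => if i = 1 then y else x, by norm_num, ?_⟩
    intro i hi
    interval_cases i <;> simpa
  have hle : girth A ≤ 2 := Nat.sInf_le ⟨by omega, hc⟩
  omega

lemma girth3_circuit {A : V → V → Prop} (hg : girth A = 3) : HasCircuitOfLength A 3 := by
  have hne : {n | 1 ≤ n ∧ HasCircuitOfLength A n}.Nonempty := by
    by_contra h
    rw [Set.not_nonempty_iff_eq_empty] at h
    have : girth A = 0 := by rw [girth, h, Nat.sInf_empty]
    omega
  have hmem : girth A ∈ {n | 1 ≤ n ∧ HasCircuitOfLength A n} := Nat.sInf_mem hne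
  rw [hg] at hmem
  exact hmem.2

/-- if `Σ` is a semicomplete weakly distance-regular digraph with girth `3`,
then `Σ ∘ C₄` is weakly distance-regular. -/
theorem statement_19 {W : Type*} [Fintype W] [Nonempty W] (S : W → W → Prop)
    (hsemi : IsSemicomplete S) (hwdrd : IsWDRD S) (hg : girth S = 3) :
    IsWDRD (lexProd S C4) := by
  obtain ⟨hirr, htot⟩ := hsemi
  obtain ⟨hsc, -, hp⟩ := hwdrd
  have hnd : ∀ x y, ¬ (S x y ∧ S y x) := no_digon hg
  have hstr := structure_S hirr htot hnd hsc hp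
  refine ⟨gamma_sc hstr, ?_, fun i j x y x' y' ht => pnum_const hirr hnd hstr hp i j x y x' y' ht⟩
  obtain ⟨p, hp3, harcs⟩ := girth3_circuit hg
  have harc : S (p 0) (p 1) := harcs 0 (by omega)
  have hne01 : p 0 ≠ p 1 := fun h => hirr (p 1) (h ▸ harc)
  have ht : tdist S (p 0) (p 1) = (1, 2) := by
    rcases hstr (p 0) (p 1) hne01 with ⟨_, h⟩ | ⟨h, _⟩
    · exact h
    · exact absurd ⟨harc, h⟩ (hnd _ _)
  refine ⟨(1, 2), ⟨(p 0, 0), (p 1, 0), ?_⟩, by decide⟩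
  rw [tdist_cross hirr hnd hstr hne01, ht]

end Paper
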